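/- arXiv:1907.06245 — 2 statements merged into one kernel-verified Lean document; each statement's English description precedes it below -/
import Mathlib

section
/- For each k with 1 ≤ k ≤ 2^{r-2}, the subgraphs B_k of WB(r) induced by the vertex sets {(i, 4(k-1)+j) : 0 ≤ i ≤ r-1, 1 ≤ j ≤ 4} are pairwise isomorphic. -/
/-- `w` and `w'` differ in precisely the `n`-th bit. -/
def differOnly {r : ℕ} (w w' : Fin r → Bool) (n : ℕ) : Prop :=
  ∀ t : Fin r, ((t : ℕ) = n → w t ≠ w' t) ∧ ((t : ℕ) ≠ n → w t = w' t)

/-- The `r`-dimensional butterfly network `BF(r)`: vertices are pairs `[w, i]` with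
`w` an `r`-bit string and `0 ≤ i ≤ r`; `[w,i]` and `[w',i']` are adjacent iff
`i' = i + 1` and either `w = w'` or `w, w'` differ in precisely the `i`-th bit. -/
def butterfly (r : ℕ) : SimpleGraph ((Fin r → Bool) × Fin (r + 1)) :=
  SimpleGraph.fromRel (fun u v =>
    (v.2 : ℕ) = (u.2 : ℕ) + 1 ∧ (u.1 = v.1 ∨ differOnly u.1 v.1 (u.2 : ℕ)))

/-- The `r`-dimensional wrapped butterfly `WB(r)`: vertices are pairs `(i, w)` with
`i ∈ ℤ/rℤ` (modelled as `Fin r` with wrap-around addition) and `w` an `r`-bit string;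
`(i, w)` is adjacent to `(i+1, w')` iff `w = w'` or `w, w'` differ exactly in bit `i`. -/
def wrappedButterfly (r : ℕ) : SimpleGraph (Fin r × (Fin r → Bool)) :=
  SimpleGraph.fromRel (fun u v =>
    (v.1 : ℕ) = ((u.1 : ℕ) + 1) % r ∧ (u.2 = v.2 ∨ differOnly u.2 v.2 (u.1 : ℕ)))

/-- The row number of a row string `w` (so the left-to-right label of the column of `w`
is `rowNum w + 1`). -/
def rowNum {r : ℕ} (w : Fin r → Bool) : ℕ :=
  ∑ t : Fin r, if w t then 2 ^ (t : ℕ) else 0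

/-- The vertex set of the subgraph `B_k` of `WB(r)`: the four consecutive columns
`4(k-1)+1, …, 4(k-1)+4` in the left-to-right labeling. -/
def Bblock (r k : ℕ) : Set (Fin r × (Fin r → Bool)) :=
  {v | ∃ j, 1 ≤ j ∧ j ≤ 4 ∧ rowNum v.2 + 1 = 4 * (k - 1) + j}


/-- replace the high bits of `w` with the bits of `k - 1`. -/
def gmap (r k : ℕ) (w : Fin r → Bool) : Fin r → Bool :=
  fun t => if (t : ℕ) < 2 then w t else (k - 1).testBit ((t : ℕ) - 2)

lemma testBit_rowNum : ∀ {r : ℕ} (w : Fin r → Bool) (m : ℕ),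
    (rowNum w).testBit m = if h : m < r then w ⟨m, h⟩ else false := by
  intro r
  induction r with
  | zero => intro w m; simp [rowNum, Nat.testBit_zero]
  | succ r ih =>
    intro w m
    have hrow : rowNum w = (if w 0 then 1 else 0) + 2 * rowNum (fun t => w t.succ) := by
      rw [rowNum, Fin.sum_univ_succ, rowNum, Finset.mul_sum]
      have h0 : (if w 0 = true then 2 ^ (((0 : Fin (r+1))) : ℕ) else 0) = (if w 0 then 1 else 0) := by
        simp
      rw [h0]
      congr 1
      apply Finset.sum_congr rfl
      intro t _
      by_cases h : w t.succ <;> simp [h, pow_succ, mul_comm]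
    cases m with
    | zero =>
      rw [hrow, Nat.testBit_zero]
      by_cases h : w 0 <;> simp [h, Nat.add_mul_mod_self_left]
    | succ m =>
      rw [hrow, Nat.testBit_add_one]
      have hdiv : ((if w 0 then 1 else 0) + 2 * rowNum (fun t => w t.succ)) / 2
          = rowNum (fun t => w t.succ) := by
        by_cases h : w 0 <;> simp [h] <;> omega
      rw [hdiv, ih]
      by_cases h : m < r
      · rw [dif_pos h, dif_pos (by omega : m + 1 < r + 1)]
        congr 1
      · rw [dif_neg h, dif_neg (by omega)]

lemma mem_Bblock_iff {r k : ℕ} (v : Fin r × (Fin r → Bool)) :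
    v ∈ Bblock r k ↔ rowNum v.2 / 4 = k - 1 := by
  constructor
  · rintro ⟨j, hj1, hj4, hj⟩; omega
  · intro h
    exact ⟨rowNum v.2 % 4 + 1, by omega, by omega, by omega⟩

lemma testBit_div4 (n i : ℕ) : (n / 4).testBit i = n.testBit (i + 2) := by
  rw [Nat.testBit_add_one, Nat.testBit_add_one]
  congr 1
  omega

lemma highBit_of_mem {r k : ℕ} {w : Fin r → Bool}
    (h : rowNum w / 4 = k - 1) {i : ℕ} (hi : i + 2 < r) :
    w ⟨i + 2, hi⟩ = (k - 1).testBit i := by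
  have h1 := testBit_rowNum w (i + 2)
  rw [dif_pos hi] at h1
  rw [← h1, ← h, testBit_div4]

lemma gmap_mem {r k' : ℕ} (hk'2 : k' - 1 < 2 ^ (r - 2)) (w : Fin r → Bool) :
    rowNum (gmap r k' w) / 4 = k' - 1 := by
  apply Nat.eq_of_testBit_eq
  intro i
  rw [testBit_div4, testBit_rowNum]
  by_cases h : i + 2 < r
  · rw [dif_pos h]
    simp only [gmap]
    rw [if_neg (by omega)]
    congr 1
  · rw [dif_neg h]
    symm
    apply Nat.testBit_eq_false_of_lt
    calc k' - 1 < 2 ^ (r - 2) := hk'2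
    _ ≤ 2 ^ i := Nat.pow_le_pow_right (by norm_num) (by omega)

lemma gmap_gmap {r k k' : ℕ} {w : Fin r → Bool}
    (hw : rowNum w / 4 = k - 1) : gmap r k (gmap r k' w) = w := by
  funext t
  by_cases h2 : (t : ℕ) < 2
  · simp [gmap, h2]
  · simp only [gmap, if_neg h2]
    have ht : ((t : ℕ) - 2) + 2 < r := by omega
    have h3 : (⟨(t : ℕ) - 2 + 2, ht⟩ : Fin r) = t := Fin.ext (by simp; omega)
    have h4 := highBit_of_mem hw (i := (t : ℕ) - 2) ht
    rw [h3] at h4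
    exact h4.symm

lemma gmap_inj {r k k' : ℕ} {w w' : Fin r → Bool}
    (hw : rowNum w / 4 = k - 1) (hw' : rowNum w' / 4 = k - 1)
    (h : gmap r k' w = gmap r k' w') : w = w' := by
  rw [← gmap_gmap (k' := k') hw, ← gmap_gmap (k' := k') hw', h]

lemma differOnly_gmap {r k k' : ℕ} {w w' : Fin r → Bool} {n : ℕ}
    (hw : rowNum w / 4 = k - 1) (hw' : rowNum w' / 4 = k - 1)
    (hn : n < r) (hd : differOnly w w' n) :
    differOnly (gmap r k' w) (gmap r k' w') n := by
  have hn2 : n < 2 := by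
    by_contra hn2
    have ht : (n - 2) + 2 < r := by omega
    have h1 := highBit_of_mem hw (i := n - 2) ht
    have h2 := highBit_of_mem hw' (i := n - 2) ht
    have := (hd ⟨(n - 2) + 2, ht⟩).1 (by simp; omega)
    rw [h1, h2] at this
    exact this rfl
  intro t
  constructor
  · intro ht
    simp only [gmap, ht, if_pos hn2]
    exact (hd t).1 ht
  · intro ht
    by_cases h2 : (t : ℕ) < 2
    · simp only [gmap, if_pos h2]
      exact (hd t).2 ht
    · simp [gmap, h2]

lemma rel_gmap {r k k' : ℕ} {u v : Fin r × (Fin r → Bool)}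
    (hu : rowNum u.2 / 4 = k - 1) (hv : rowNum v.2 / 4 = k - 1)
    (h : (v.1 : ℕ) = ((u.1 : ℕ) + 1) % r ∧ (u.2 = v.2 ∨ differOnly u.2 v.2 (u.1 : ℕ))) :
    (v.1 : ℕ) = ((u.1 : ℕ) + 1) % r ∧
      (gmap r k' u.2 = gmap r k' v.2 ∨ differOnly (gmap r k' u.2) (gmap r k' v.2) (u.1 : ℕ)) := by
  refine ⟨h.1, ?_⟩
  rcases h.2 with h2 | h2
  · exact Or.inl (by rw [h2])
  · exact Or.inr (differOnly_gmap hu hv u.1.isLt h2)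

lemma adj_gmap {r k k' : ℕ} {u v : Fin r × (Fin r → Bool)}
    (hu : rowNum u.2 / 4 = k - 1) (hv : rowNum v.2 / 4 = k - 1)
    (h : (wrappedButterfly r).Adj u v) :
    (wrappedButterfly r).Adj (u.1, gmap r k' u.2) (v.1, gmap r k' v.2) := by
  rw [wrappedButterfly, SimpleGraph.fromRel_adj] at h ⊢
  refine ⟨?_, ?_⟩
  · intro he
    rw [Prod.mk.injEq] at he
    exact h.1 (Prod.ext_iff.mpr ⟨he.1, gmap_inj hu hv he.2⟩)
  · rcases h.2 with h2 | h2
    · exact Or.inl (rel_gmap hu hv h2)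
    · exact Or.inr (rel_gmap hv hu h2)
/-- The subgraphs `B_k`, `1 ≤ k ≤ 2^(r-2)`, of `WB(r)` induced by the four consecutive
columns `4(k-1)+1, …, 4(k-1)+4` are pairwise isomorphic. -/
theorem Bblocks_isomorphic (r : ℕ) (k₁ k₂ : ℕ)
    (hk₁ : 1 ≤ k₁) (hk₁' : k₁ ≤ 2 ^ (r - 2)) (hk₂ : 1 ≤ k₂) (hk₂' : k₂ ≤ 2 ^ (r - 2)) :
    Nonempty ((wrappedButterfly r).induce (Bblock r k₁) ≃g
      (wrappedButterfly r).induce (Bblock r k₂)) := by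
  have hb₁ : k₁ - 1 < 2 ^ (r - 2) := by omega
  have hb₂ : k₂ - 1 < 2 ^ (r - 2) := by omega
  refine ⟨⟨⟨fun p => ⟨(p.1.1, gmap r k₂ p.1.2), (mem_Bblock_iff _).mpr (gmap_mem hb₂ _)⟩,
      fun p => ⟨(p.1.1, gmap r k₁ p.1.2), (mem_Bblock_iff _).mpr (gmap_mem hb₁ _)⟩, ?_, ?_⟩, ?_⟩⟩
  · intro p
    apply Subtype.ext
    exact Prod.ext_iff.mpr ⟨rfl, gmap_gmap ((mem_Bblock_iff p.1).mp p.2)⟩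
  · intro p
    apply Subtype.ext
    exact Prod.ext_iff.mpr ⟨rfl, gmap_gmap ((mem_Bblock_iff p.1).mp p.2)⟩
  · intro a b
    show (wrappedButterfly r).Adj (a.1.1, gmap r k₂ a.1.2) (b.1.1, gmap r k₂ b.1.2) ↔
      (wrappedButterfly r).Adj a.1 b.1
    have ha := (mem_Bblock_iff a.1).mp a.2
    have hb := (mem_Bblock_iff b.1).mp b.2
    constructor
    · intro h
      have h' := adj_gmap (k := k₂) (k' := k₁)
        (gmap_mem hb₂ a.1.2) (gmap_mem hb₂ b.1.2) h
      simpa only [gmap_gmap ha, gmap_gmap hb] using h'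
    · intro h
      exact adj_gmap (k := k₁) (k' := k₂) ha hb h
end

section
/- The crossing number of the r-dimensional wrapped butterfly WB(r) satisfies Cr(WB(r)) ≤ (7/8)·4^r - (3r-4)·2^r for all r ≥ 6, given the drawing-based recurrence: there exists a good drawing of WB(r) whose number of crossings g(r) satisfies g(5) ≤ 544 and g(k) ≤ 2·g(k-1) + 2^{2k-2} + 2^{k+1}(2^{k-4}-1) + 2^k(2^{k-4}-1) for k ≥ 6. -/
/-- Given the drawing-based recurrence (for each `r` there is a good drawing of `WB(r)`
with `g(r)` crossings, so `Cr(WB(r)) ≤ g(r)`, with `g(5) ≤ 544` and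
`g(k) ≤ 2g(k-1) + 2^(2k-2) + 2^(k+1)(2^(k-4)-1) + 2^k(2^(k-4)-1)` for `k ≥ 6`),
the crossing number of `WB(r)` satisfies `Cr(WB(r)) ≤ (7/8)·4^r - (3r-4)·2^r` for `r ≥ 6`. -/
theorem crossing_number_bound (crWB g : ℕ → ℕ)
    (hdraw : ∀ r, crWB r ≤ g r)
    (h5 : g 5 ≤ 544)
    (hrec : ∀ k, 6 ≤ k →
      g k ≤ 2 * g (k - 1) + 2 ^ (2 * k - 2) + 2 ^ (k + 1) * (2 ^ (k - 4) - 1)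
        + 2 ^ k * (2 ^ (k - 4) - 1)) :
    ∀ r, 6 ≤ r → (crWB r : ℚ) ≤ 7 / 8 * 4 ^ r - (3 * r - 4) * 2 ^ r := by
  have key : ∀ m : ℕ, (g (m + 6) : ℚ) ≤ 7 / 8 * 4 ^ (m + 6) - (3 * (m + 6) - 4) * 2 ^ (m + 6) := by
    intro m
    induction m with
    | zero =>
      have h6 := hrec 6 (by norm_num)
      norm_num at h6
      have : g 6 ≤ 2688 := by omega
      have : (g 6 : ℚ) ≤ 2688 := by exact_mod_cast this
      norm_num
      linarith
    | succ n ih =>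
      have h7 := hrec (n + 7) (by omega)
      have e1 : n + 7 - 1 = n + 6 := by omega
      have e2 : 2 * (n + 7) - 2 = 2 * n + 12 := by omega
      have e3 : n + 7 - 4 = n + 3 := by omega
      rw [e1, e2, e3] at h7
      have hq : (g (n + 7) : ℚ) ≤ 2 * g (n + 6) + 2 ^ (2 * n + 12)
          + 2 ^ (n + 8) * (2 ^ (n + 3) - 1) + 2 ^ (n + 7) * (2 ^ (n + 3) - 1) := by
        have h1 : (1 : ℕ) ≤ 2 ^ (n + 3) := Nat.one_le_two_pow
        exact_mod_cast h7
      have hx : (4 : ℚ) ^ n = 2 ^ n * 2 ^ n := by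
        rw [show (4 : ℚ) = 2 * 2 by norm_num, mul_pow]
      have e4 : (2 : ℚ) ^ (2 * n + 12) = 4096 * (2 ^ n * 2 ^ n) := by
        rw [pow_add, two_mul, pow_add]; ring
      have e5 : (2 : ℚ) ^ (n + 8) = 256 * 2 ^ n := by rw [pow_add]; ring
      have e6 : (2 : ℚ) ^ (n + 7) = 128 * 2 ^ n := by rw [pow_add]; ring
      have e7 : (2 : ℚ) ^ (n + 3) = 8 * 2 ^ n := by rw [pow_add]; ring
      have e8 : (2 : ℚ) ^ (n + 6) = 64 * 2 ^ n := by rw [pow_add]; ring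
      have e9 : (4 : ℚ) ^ (n + 6) = 4096 * (2 ^ n * 2 ^ n) := by
        rw [pow_add, hx]; ring
      have e10 : (4 : ℚ) ^ (n + 1 + 6) = 16384 * (2 ^ n * 2 ^ n) := by
        rw [pow_add, pow_add, hx]; ring
      have e11 : (2 : ℚ) ^ (n + 1 + 6) = 128 * 2 ^ n := by
        rw [pow_add, pow_add]; ring
      rw [e4, e5, e6, e7] at hq
      rw [e8, e9] at ih
      rw [e10, e11]
      have hgn : (g (n + 1 + 6) : ℚ) = (g (n + 7) : ℚ) := by norm_num
      rw [hgn]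
      push_cast
      nlinarith [hq, ih]
  intro r hr
  obtain ⟨m, rfl⟩ : ∃ m, r = m + 6 := ⟨r - 6, by omega⟩
  have h1 : (crWB (m + 6) : ℚ) ≤ g (m + 6) := by exact_mod_cast hdraw (m + 6)
  have h2 := key m
  push_cast at h2 ⊢
  linarith
end
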